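/- Let ÷ be an AGM contraction operator with contraction-compatible faithful assignment Ψ ↦ ≤_Ψ. Then ÷ satisfies (IC2): if α ⊨ β then Bel(Ψ ÷ α ÷ β) =_{¬β} Bel(Ψ ÷ β), if and only if the assignment satisfies (IC2^rel): for all ω₁, ω₂ ⊨ ¬α, ω₁ ≤_Ψ ω₂ iff ω₁ ≤_{Ψ÷α} ω₂. -/

import Mathlib

inductive Form (V : Type) : Type
  | var : V → Form V
  | falsum : Form V
  | imp : Form V → Form V → Form V

namespace Form

def eval {V : Type} (w : V → Bool) : Form V → Bool
  | var v => w v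
  | falsum => false
  | imp a b => !(eval w a) || eval w b

def neg {V : Type} (a : Form V) : Form V := imp a falsum

def top {V : Type} : Form V := neg falsum

def conj {V : Type} (a b : Form V) : Form V := neg (imp a (neg b))

end Form

/-- Worlds (propositional interpretations) over the signature `V`. -/
abbrev World (V : Type) := V → Bool

/-- Models of a single formula. -/
def FMod {V : Type} (a : Form V) : Set (World V) := {w | a.eval w = true}

/-- Models of a set of formulas. -/
def SMod {V : Type} (X : Set (Form V)) : Set (World V) := {w | ∀ a ∈ X, a.eval w = true}

/-- Deductive closure (consequence operator). -/
def Cn {V : Type} (X : Set (Form V)) : Set (Form V) := {b | ∀ w ∈ SMod X, b.eval w = true}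

/-- Minimal elements of a set of worlds w.r.t. a relation. -/
def minSet {V : Type} (S : Set (World V)) (r : World V → World V → Prop) : Set (World V) :=
  {w ∈ S | ∀ w' ∈ S, r w w'}

/-- Total preorder: total (hence reflexive) and transitive. -/
def TotalPre {V : Type} (r : World V → World V → Prop) : Prop :=
  (∀ x y, r x y ∨ r y x) ∧ (∀ x y z, r x y → r y z → r x z)

/-- A belief change operator over epistemic states `E`: each state has a
deductively closed belief set, and the operator maps a state and a formula to a state. -/
structure BCO (V E : Type) where
  Bel : E → Set (Form V)
  closed : ∀ Ψ, Cn (Bel Ψ) = Bel Ψ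
  op : E → Form V → E

/-- Models of (the belief set of) an epistemic state. -/
def stMod {V E : Type} (O : BCO V E) (Ψ : E) : Set (World V) := SMod (O.Bel Ψ)

/-- Faithful assignment: each `le Ψ` is a total preorder; models of `Ψ` are mutually
equivalent and strictly below non-models. -/
def Faithful {V E : Type} (O : BCO V E) (le : E → World V → World V → Prop) : Prop :=
  (∀ Ψ, TotalPre (le Ψ)) ∧
  (∀ Ψ w₁ w₂, w₁ ∈ stMod O Ψ → w₂ ∈ stMod O Ψ → le Ψ w₁ w₂) ∧
  (∀ Ψ w₁ w₂, w₁ ∈ stMod O Ψ → w₂ ∉ stMod O Ψ → (le Ψ w₁ w₂ ∧ ¬ le Ψ w₂ w₁))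

/-- Contraction-compatibility: `[[Ψ ÷ α]] = [[Ψ]] ∪ min([[¬α]], ≤_Ψ)`. -/
def ContrCompat {V E : Type} (O : BCO V E) (le : E → World V → World V → Prop) : Prop :=
  ∀ Ψ (α : Form V), stMod O (O.op Ψ α) = stMod O Ψ ∪ minSet (FMod α.neg) (le Ψ)

/-- Revision-compatibility: `[[Ψ * α]] = min([[α]], ≤_Ψ)`. -/
def RevCompat {V E : Type} (O : BCO V E) (le : E → World V → World V → Prop) : Prop :=
  ∀ Ψ (α : Form V), stMod O (O.op Ψ α) = minSet (FMod α) (le Ψ)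

/-- The AGM contraction postulates (C1)–(C7) for epistemic states. -/
def AGMContr {V E : Type} (O : BCO V E) : Prop :=
  (∀ Ψ α, O.Bel (O.op Ψ α) ⊆ O.Bel Ψ) ∧
  (∀ Ψ α, α ∉ O.Bel Ψ → O.Bel Ψ ⊆ O.Bel (O.op Ψ α)) ∧
  (∀ Ψ (α : Form V), ¬ (∀ w, w ∈ FMod α) → α ∉ O.Bel (O.op Ψ α)) ∧
  (∀ Ψ α, O.Bel Ψ ⊆ Cn (O.Bel (O.op Ψ α) ∪ {α})) ∧
  (∀ Ψ α β, FMod α = FMod β → O.Bel (O.op Ψ α) = O.Bel (O.op Ψ β)) ∧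
  (∀ Ψ (α β : Form V), O.Bel (O.op Ψ α) ∩ O.Bel (O.op Ψ β) ⊆ O.Bel (O.op Ψ (α.conj β))) ∧
  (∀ Ψ (α β : Form V), β ∉ O.Bel (O.op Ψ (α.conj β)) → O.Bel (O.op Ψ (α.conj β)) ⊆ O.Bel (O.op Ψ β))

/-- Unbiasedness: every consistent set of formulas has an epistemic state whose
belief set is its deductive closure. -/
def Unbiased {V E : Type} (O : BCO V E) : Prop :=
  ∀ L : Set (Form V), (SMod L).Nonempty → ∃ Ψ : E, O.Bel Ψ = Cn L


/-!
Over a finite signature any two worlds `ω₁, ω₂` are exactly the countermodels of some `β`, and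
then contraction-compatibility says `ω₁ ∈ [[Ψ ÷ β]]` iff `ω₁ ≤_Ψ ω₂`. If `ω₁, ω₂ ⊨ ¬α` then
`α ⊨ β`, so (IC2) for this `β` compares `≤_Ψ` with `≤_{Ψ÷α}` on `ω₁, ω₂`. Conversely, for
`α ⊨ β` the `¬β`-part of `[[Ψ ÷ α ÷ β]]` is `[[Ψ]] ∪ min([[¬α]], ≤_Ψ) ∪ min([[¬β]], ≤_{Ψ÷α})`
cut down to `[[¬β]]`; the middle term contributes only minimal `¬β`-worlds, and (IC2ʳᵉˡ) makes
the last term equal to `min([[¬β]], ≤_Ψ)`.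
-/

namespace Form

variable {V : Type}

@[simp]
lemma eval_neg (a : Form V) (w : World V) : a.neg.eval w = !a.eval w := by
  simp [neg, eval]

@[simp]
lemma eval_conj (a b : Form V) (w : World V) : (a.conj b).eval w = (a.eval w && b.eval w) := by
  simp [conj, eval]

def literal (w : World V) (v : V) : Form V :=
  if w v then var v else (var v).neg

def charOn (w : World V) : List V → Form V
  | [] => top
  | v :: vs => conj (literal w v) (charOn w vs)

noncomputable def char [Fintype V] (w : World V) : Form V :=
  charOn w Finset.univ.toList

end Form

section Models

variable {V : Type}

lemma FMod_neg (a : Form V) : FMod a.neg = (FMod a)ᶜ := by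
  ext w
  simp [FMod]

lemma FMod_conj (a b : Form V) : FMod (a.conj b) = FMod a ∩ FMod b := by
  ext w
  simp [FMod]

lemma FMod_neg_subset_iff (a b : Form V) : FMod a.neg ⊆ FMod b.neg ↔ FMod b ⊆ FMod a := by
  rw [FMod_neg, FMod_neg, Set.compl_subset_compl]

lemma FMod_literal (w : World V) (v : V) : FMod (Form.literal w v) = {w' | w' v = w v} := by
  ext w'
  cases h : w v <;> simp [FMod, Form.literal, Form.eval, h]

lemma FMod_charOn (w : World V) (l : List V) :
    FMod (Form.charOn w l) = {w' | ∀ v ∈ l, w' v = w v} := by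
  induction l with
  | nil => ext; simp [Form.charOn, FMod, Form.top, Form.eval]
  | cons v vs ih =>
    rw [Form.charOn, FMod_conj, ih, FMod_literal]
    ext
    simp

lemma FMod_char [Fintype V] (w : World V) : FMod (Form.char w) = {w} := by
  ext w'
  simp [Form.char, FMod_charOn, funext_iff]

lemma exists_FMod_neg_eq_pair [Fintype V] (ω₁ ω₂ : World V) :
    ∃ β : Form V, FMod β.neg = {ω₁, ω₂} :=
  ⟨(Form.char ω₁).neg.conj (Form.char ω₂).neg, by
    rw [FMod_neg, FMod_conj, FMod_neg, FMod_neg, FMod_char, FMod_char, Set.compl_inter,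
      compl_compl, compl_compl, Set.singleton_union]⟩

end Models

section MinSet

variable {V : Type} {r r' : World V → World V → Prop}

lemma mem_minSet_pair_iff (hr : ∀ w, r w w) (ω₁ ω₂ : World V) :
    ω₁ ∈ minSet {ω₁, ω₂} r ↔ r ω₁ ω₂ := by
  simp [minSet, hr]

lemma minSet_congr {S : Set (World V)} (h : ∀ w ∈ S, ∀ w' ∈ S, (r w w' ↔ r' w w')) :
    minSet S r = minSet S r' := by
  ext w
  exact and_congr_right fun hw => forall₂_congr fun w' hw' => h w hw w' hw'

lemma minSet_inter_subset_minSet {S T : Set (World V)} (hTS : T ⊆ S) :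
    minSet S r ∩ T ⊆ minSet T r :=
  fun _ ⟨hmin, hw⟩ => ⟨hw, fun w' hw' => hmin.2 w' (hTS hw')⟩

end MinSet

namespace Faithful

variable {V E : Type} {O : BCO V E} {le : E → World V → World V → Prop}

lemma refl (hF : Faithful O le) (Ψ : E) (w : World V) : le Ψ w w :=
  ((hF.1 Ψ).1 w w).elim id id

lemma le_of_mem_stMod (hF : Faithful O le) {Ψ : E} {w : World V} (hw : w ∈ stMod O Ψ)
    (w' : World V) : le Ψ w w' := by
  by_cases hw' : w' ∈ stMod O Ψ
  · exact hF.2.1 Ψ w w' hw hw'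
  · exact (hF.2.2 Ψ w w' hw hw').1

end Faithful

namespace ContrCompat

variable {V E : Type} {O : BCO V E} {le : E → World V → World V → Prop}

lemma mem_stMod_op_iff_le (hF : Faithful O le) (hC : ContrCompat O le) (Ψ : E)
    {β : Form V} {ω₁ ω₂ : World V} (hβ : FMod β.neg = {ω₁, ω₂}) :
    ω₁ ∈ stMod O (O.op Ψ β) ↔ le Ψ ω₁ ω₂ := by
  rw [hC, hβ, Set.mem_union, mem_minSet_pair_iff (hF.refl Ψ)]
  exact or_iff_right_of_imp fun h => hF.le_of_mem_stMod h ω₂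

lemma stMod_op_op_inter_neg (hC : ContrCompat O le) (Ψ : E) {α β : Form V}
    (hβα : FMod β.neg ⊆ FMod α.neg)
    (hrel : ∀ ω₁ ∈ FMod α.neg, ∀ ω₂ ∈ FMod α.neg, (le Ψ ω₁ ω₂ ↔ le (O.op Ψ α) ω₁ ω₂)) :
    stMod O (O.op (O.op Ψ α) β) ∩ FMod β.neg = stMod O (O.op Ψ β) ∩ FMod β.neg := by
  have hmin : minSet (FMod β.neg) (le (O.op Ψ α)) = minSet (FMod β.neg) (le Ψ) :=
    (minSet_congr fun w hw w' hw' => hrel w (hβα hw) w' (hβα hw')).symm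
  have hmin_α := minSet_inter_subset_minSet (r := le Ψ) hβα
  rw [hC, hC, hC, hmin]
  ext w
  simp only [Set.mem_inter_iff, Set.mem_union]
  constructor
  · rintro ⟨(hΨ | hα) | hβ, hw⟩
    · exact ⟨Or.inl hΨ, hw⟩
    · exact ⟨Or.inr (hmin_α ⟨hα, hw⟩), hw⟩
    · exact ⟨Or.inr hβ, hw⟩
  · rintro ⟨hΨ | hβ, hw⟩
    · exact ⟨Or.inl (Or.inl hΨ), hw⟩
    · exact ⟨Or.inr hβ, hw⟩

end ContrCompat

theorem stmt_17_general {V E : Type} [Fintype V] (O : BCO V E)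
    (le : E → World V → World V → Prop)
    (hF : Faithful O le) (hC : ContrCompat O le) :
    (∀ (Ψ : E) (α β : Form V), FMod α ⊆ FMod β →
        SMod (O.Bel (O.op (O.op Ψ α) β)) ∩ FMod β.neg =
          SMod (O.Bel (O.op Ψ β)) ∩ FMod β.neg) ↔
    (∀ (Ψ : E) (α : Form V) (ω₁ ω₂ : World V),
        ω₁ ∈ FMod α.neg → ω₂ ∈ FMod α.neg → (le Ψ ω₁ ω₂ ↔ le (O.op Ψ α) ω₁ ω₂)) := by
  constructor
  · intro hIC2 Ψ α ω₁ ω₂ h₁ h₂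
    obtain ⟨β, hβ⟩ := exists_FMod_neg_eq_pair ω₁ ω₂
    have hαβ : FMod α ⊆ FMod β := by
      rw [← FMod_neg_subset_iff, hβ]
      exact Set.insert_subset h₁ (Set.singleton_subset_iff.mpr h₂)
    have hω₁ : ω₁ ∈ FMod β.neg := hβ ▸ Set.mem_insert ω₁ {ω₂}
    have hsame := Set.ext_iff.mp (hIC2 Ψ α β hαβ) ω₁
    simp only [Set.mem_inter_iff, hω₁, and_true] at hsame
    rw [← hC.mem_stMod_op_iff_le hF Ψ hβ, ← hC.mem_stMod_op_iff_le hF (O.op Ψ α) hβ]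
    exact hsame.symm
  · intro hrel Ψ α β hαβ
    exact hC.stMod_op_op_inter_neg Ψ ((FMod_neg_subset_iff β α).mpr hαβ)
      fun ω₁ h₁ ω₂ h₂ => hrel Ψ α ω₁ ω₂ h₁ h₂

/-- (IC2) holds iff the assignment satisfies (IC2ʳᵉˡ). -/
theorem stmt_17 {V E : Type} [Fintype V] (O : BCO V E)
    (le : E → World V → World V → Prop)
    (hA : AGMContr O) (hF : Faithful O le) (hC : ContrCompat O le) :
    (∀ (Ψ : E) (α β : Form V), FMod α ⊆ FMod β →
        SMod (O.Bel (O.op (O.op Ψ α) β)) ∩ FMod β.neg =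
          SMod (O.Bel (O.op Ψ β)) ∩ FMod β.neg) ↔
    (∀ (Ψ : E) (α : Form V) (ω₁ ω₂ : World V),
        ω₁ ∈ FMod α.neg → ω₂ ∈ FMod α.neg → (le Ψ ω₁ ω₂ ↔ le (O.op Ψ α) ω₁ ω₂)) :=
  stmt_17_general O le hF hC
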